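/- arXiv:1403.5763 — 3 statements merged into one kernel-verified Lean document; each statement's English description precedes it below -/
import Mathlib

section
/- If forking in T has the symmetry property (i.e., tp(c̄/Ab̄) forks over A iff tp(b̄/Ac̄) forks over A for all finite tuples b̄, c̄ and sets A), then forking has dual finite character. -/
universe u v w

open FirstOrder FirstOrder.Language Set

variable {L : FirstOrder.Language.{u, v}} {M : Type w} [L.Structure M]

/-- `c` and `c'` have the same type over the parameter set `A`. -/
def SameTypeOver (A : Set M) {n : ℕ} (c c' : Fin n → M) : Prop :=
  ∀ φ : (L[[A]]).Formula (Fin n), φ.Realize c ↔ φ.Realize c'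

/-- The sequence `b` (of `d`-tuples) is indiscernible over `A`. -/
def IndiscernibleOver (A : Set M) {I : Type*} [LinearOrder I] {d : ℕ}
    (b : I → Fin d → M) : Prop :=
  ∀ (n : ℕ) (i j : Fin n → I), StrictMono i → StrictMono j →
    ∀ φ : (L[[A]]).Formula (Fin n × Fin d),
      φ.Realize (fun p => b (i p.1) p.2) ↔ φ.Realize (fun p => b (j p.1) p.2)

/-- The conclusion of the Tent–Ziegler EM-extraction lemma: every finite subtype (over `A`)
of the type of an increasing tuple from `b` is realized by an increasing tuple from `a`. -/
def LocallyBased (A : Set M) {I : Type*} [LinearOrder I] {d : ℕ}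
    (b : I → Fin d → M) (a : ℕ → Fin d → M) : Prop :=
  ∀ (n : ℕ) (i : Fin n → I), StrictMono i →
    ∀ s : Finset ((L[[A]]).Formula (Fin n × Fin d)),
      (∀ φ ∈ s, φ.Realize (fun p => b (i p.1) p.2)) →
      ∃ j : Fin n → ℕ, StrictMono j ∧ ∀ φ ∈ s, φ.Realize (fun p => a (j p.1) p.2)

/-- Dual finite character for an abstract forking relation `Forks c B A` = "tp(c/B) forks
over A". -/
def HasDFC (Forks : ∀ {n : ℕ}, (Fin n → M) → Set M → Set M → Prop) : Prop :=
  ∀ (A : Set M) {n m : ℕ} (c : Fin n → M) (b : Fin m → M),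
    Forks c (A ∪ range b) A →
    ∃ φ : (L[[A]]).Formula (Fin n ⊕ Fin m),
      φ.Realize (Sum.elim c b) ∧
      ∀ b' : Fin m → M, φ.Realize (Sum.elim c b') → Forks c (A ∪ range b') A

namespace FirstOrder.Language.Formula

theorem realize_relabel_swap {α β : Type*} (ψ : L.Formula (α ⊕ β)) (f : α → M) (g : β → M) :
    (ψ.relabel Sum.swap).Realize (Sum.elim g f) ↔ ψ.Realize (Sum.elim f g) := by
  rw [realize_relabel, Sum.elim_swap]

end FirstOrder.Language.Formula

/-- if forking has the symmetry property (and forking is witnessed by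
formulas), then forking has dual finite character. -/
theorem symmetry_implies_dfc
    (Forks : ∀ {n : ℕ}, (Fin n → M) → Set M → Set M → Prop)
    (hsym : ∀ (A : Set M) {n m : ℕ} (c : Fin n → M) (b : Fin m → M),
      Forks c (A ∪ range b) A ↔ Forks b (A ∪ range c) A)
    (hwitness : ∀ (A : Set M) {m n : ℕ} (b : Fin m → M) (c : Fin n → M),
      Forks b (A ∪ range c) A →
      ∃ ψ : (L[[A]]).Formula (Fin m ⊕ Fin n),
        ψ.Realize (Sum.elim b c) ∧
        ∀ b' : Fin m → M, ψ.Realize (Sum.elim b' c) → Forks b' (A ∪ range c) A) :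
    HasDFC (L := L) (M := M) Forks := by
  intro A n m c b hfork
  obtain ⟨ψ, hψ, hψ_forks⟩ := hwitness A b c ((hsym A c b).mp hfork)
  refine ⟨ψ.relabel Sum.swap, (ψ.realize_relabel_swap b c).mpr hψ, fun b' hb' => ?_⟩
  exact (hsym A c b').mpr (hψ_forks b' ((ψ.realize_relabel_swap b' c).mp hb'))
end

section
/- If forking has weak dual finite character, then T is simple. Equivalently: if T is not simple, then weak DFC fails, witnessed by a model M and tuples b̄, c̄ where tp(b̄/Mc̄) is finitely satisfiable in M but tp(c̄/Mb̄) divides over M. -/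
universe u v w

open FirstOrder FirstOrder.Language Set

variable {L : FirstOrder.Language.{u, v}} {M : Type w} [L.Structure M]

/-- `tp(c / s ∪ b)` is finitely satisfiable in `s`: every formula over `s` satisfied by
`(c, b)` is satisfied by `(c', b)` for some tuple `c'` from `s`. -/
def FinSatIn (s : Set M) {n m : ℕ} (c : Fin n → M) (b : Fin m → M) : Prop :=
  ∀ φ : (L[[s]]).Formula (Fin n ⊕ Fin m), φ.Realize (Sum.elim c b) →
    ∃ c' : Fin n → M, range c' ⊆ s ∧ φ.Realize (Sum.elim c' b)

/-- Weak dual finite character for an abstract dividing relation `Divides c B A` =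
"tp(c/B) divides over A", where the base is (the universe of) an elementary submodel. -/
def HasWeakDFC (Divides : ∀ {n : ℕ}, (Fin n → M) → Set M → Set M → Prop) : Prop :=
  ∀ (N : L.ElementarySubstructure M) {n m : ℕ} (c : Fin n → M) (b : Fin m → M),
    Divides c ((N : Set M) ∪ range b) (N : Set M) →
    ∃ φ : (L[[(N : Set M)]]).Formula (Fin n ⊕ Fin m),
      φ.Realize (Sum.elim c b) ∧
      ∀ b' : Fin m → M, φ.Realize (Sum.elim c b') → ¬ FinSatIn (L := L) (N : Set M) c b'

/-!
Take `N`, `b`, `c` with `tp(b/Nc)` finitely satisfiable in `N` and `tp(c/Nb)` dividing over `N`,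
and let `φ(c, b)` be the formula given by weak DFC. Finite satisfiability of `tp(b/Nc)` yields
`b'` in `N` with `φ(c, b')`, so `tp(c/Nb')` is not finitely satisfiable in `N`. But all
parameters of `tp(c/Nb')` lie in the model `N`, so it is finitely satisfiable in `N`.
-/

namespace FirstOrder.Language.ElementarySubstructure

theorem exists_range_subset_realize_of_realize (N : L.ElementarySubstructure M) {β : Type*}
    [Finite β] (φ : (L[[(N : Set M)]]).Formula β) (w : β → M) (hw : φ.Realize w) :
    ∃ w' : β → M, range w' ⊆ (N : Set M) ∧ φ.Realize w' := by
  -- Move the parameters of `φ` into free variables and quantify out the rest: the resulting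
  -- `L`-formula holds at the parameters, in `M` and hence in `N`.
  let θ : L.Formula ((N : Set M) ⊕ β) := BoundedFormula.constantsVarsEquiv φ
  let ι : ↥(N : Set M) → N := fun a => ⟨a, a.2⟩
  have hM : (θ.iExs β).Realize (N.subtype ∘ ι) :=
    Formula.realize_iExs.mpr ⟨w, BoundedFormula.realize_constantsVarsEquiv.mpr hw⟩
  obtain ⟨w', hw'⟩ := Formula.realize_iExs.mp ((N.subtype.map_formula (θ.iExs β) ι).mp hM)
  refine ⟨N.subtype ∘ w', by rintro _ ⟨i, rfl⟩; exact (w' i).2, ?_⟩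
  have hθ := (N.subtype.map_formula θ _).mpr hw'
  rw [Sum.comp_elim] at hθ
  exact BoundedFormula.realize_constantsVarsEquiv.mp hθ

theorem finSatIn_of_range_subset (N : L.ElementarySubstructure M) {n m : ℕ} (c : Fin n → M)
    {b : Fin m → M} (hb : range b ⊆ (N : Set M)) : FinSatIn (L := L) (N : Set M) c b := by
  intro φ hφ
  let ψ : (L[[(N : Set M)]]).Formula (Fin n) :=
    φ.subst (Sum.elim Term.var fun j => (L.con ⟨b j, hb (mem_range_self j)⟩).term)
  have hψ : ∀ c', ψ.Realize c' ↔ φ.Realize (Sum.elim c' b) := by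
    intro c'
    simp only [ψ, Formula.Realize, BoundedFormula.realize_subst]
    refine iff_of_eq (congrArg (BoundedFormula.Realize φ · default) ?_)
    ext (i | j) <;> rfl
  obtain ⟨c', hc'N, hc'⟩ := N.exists_range_subset_realize_of_realize ψ c ((hψ c).mpr hφ)
  exact ⟨c', hc'N, (hψ c').mp hc'⟩

end FirstOrder.Language.ElementarySubstructure

theorem FinSatIn.exists_realize_swap {s : Set M} {n m : ℕ} {b : Fin n → M} {c : Fin m → M}
    (h : FinSatIn (L := L) s b c) (φ : (L[[s]]).Formula (Fin m ⊕ Fin n))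
    (hφ : φ.Realize (Sum.elim c b)) :
    ∃ b' : Fin n → M, range b' ⊆ s ∧ φ.Realize (Sum.elim c b') := by
  have swap_elim : ∀ b' : Fin n → M, Sum.elim b' c ∘ Sum.swap = Sum.elim c b' := fun b' => by
    ext (i | j) <;> rfl
  obtain ⟨b', hb's, hb'⟩ := h (φ.relabel Sum.swap) (by rwa [Formula.realize_relabel, swap_elim])
  exact ⟨b', hb's, by rwa [Formula.realize_relabel, swap_elim] at hb'⟩

/-- if forking has weak dual finite character then `T` is simple.  Simplicity
enters only through the black-box fact (`hfact`, Chernikov's Lemma 6.16): if `T` is not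
simple there are a model `M₀` and tuples `b`, `c` with `tp(b/M₀c)` finitely satisfiable in
`M₀` while `tp(c/M₀b)` divides over `M₀`. -/
theorem weak_dfc_implies_simple
    (Divides : ∀ {n : ℕ}, (Fin n → M) → Set M → Set M → Prop)
    (TSimple : Prop)
    (hfact : ¬ TSimple → ∃ (N : L.ElementarySubstructure M) (n m : ℕ)
      (b : Fin n → M) (c : Fin m → M),
      FinSatIn (L := L) (N : Set M) b c ∧
      Divides c ((N : Set M) ∪ range b) (N : Set M))
    (hwdfc : HasWeakDFC (L := L) (M := M) Divides) :
    TSimple := by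
  by_contra hT
  obtain ⟨N, n, m, b, c, hfs, hdiv⟩ := hfact hT
  obtain ⟨φ, hφ, hφ_not_finSat⟩ := hwdfc N c b hdiv
  obtain ⟨b', hb'N, hφb'⟩ := hfs.exists_realize_swap φ hφ
  exact hφ_not_finSat b' hφb' (N.finSatIn_of_range_subset c hb'N)
end

section
/- The following are equivalent for a complete first-order theory T: (1) T is simple; (2) forking has dual finite character; (3) forking has weak dual finite character. -/
/-!
Under symmetry of forking, the formula witnessing that `tp(b/Ac)` forks, read with `b` and `c`
exchanged, is the formula DFC asks for; DFC implies weak DFC because finitely satisfiable types do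
not fork. Conversely, if `T` is not simple, take `tp(b/Mc)` finitely satisfiable in `M` and
`tp(c/Mb)` dividing over `M`. Whatever formula `φ(c, b)` weak DFC provides is also satisfied as
`φ(c, b')` by some `b'` from `M`, and `tp(c/Mb')` is finitely satisfiable in `M`, a contradiction.
-/

universe u v w

open FirstOrder FirstOrder.Language Set

variable {L : FirstOrder.Language.{u, v}} {M : Type w} [L.Structure M]

namespace FirstOrder.Language

theorem Formula.realize_relabel_swap_s7 {α β : Type*} (φ : L.Formula (α ⊕ β)) (v : α → M)
    (w : β → M) : (φ.relabel Sum.swap).Realize (Sum.elim w v) ↔ φ.Realize (Sum.elim v w) := by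
  rw [Formula.realize_relabel, Sum.elim_swap]

theorem ElementarySubstructure.exists_realize_sum_elim (N : L.ElementarySubstructure M)
    {α β : Type*} [Finite β] (φ : L.Formula (α ⊕ β)) {v : α → M} (hv : range v ⊆ N)
    {w : β → M} (h : φ.Realize (Sum.elim v w)) :
    ∃ w' : β → M, range w' ⊆ N ∧ φ.Realize (Sum.elim v w') := by
  let vN : α → N := fun a => ⟨v a, hv (mem_range_self a)⟩
  have hM : (φ.iExs β).Realize (N.subtype ∘ vN) := (Formula.realize_iExs).mpr ⟨w, h⟩
  obtain ⟨wN, hwN⟩ := (Formula.realize_iExs).mp ((N.subtype.map_formula _ vN).mp hM)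
  refine ⟨N.subtype ∘ wN, by rintro _ ⟨b, rfl⟩; exact (wN b).2, ?_⟩
  rwa [← N.subtype.map_formula, Sum.comp_elim] at hwN

end FirstOrder.Language

theorem finSatIn_of_range_subset (N : L.ElementarySubstructure M) {n m : ℕ}
    (c : Fin n → M) {b : Fin m → M} (hb : range b ⊆ N) :
    FinSatIn (L := L) (N : Set M) c b := by
  intro φ hφ
  -- `φ(x, b)` with its parameters from `N` turned into free variables, `x` placed last
  let ψ : L.Formula (((N : Set M) ⊕ Fin m) ⊕ Fin n) :=
    Formula.relabel (Sum.elim (Sum.inl ∘ Sum.inl) (Sum.elim Sum.inr (Sum.inl ∘ Sum.inr)))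
      (BoundedFormula.constantsVarsEquiv φ)
  have realize_ψ : ∀ c' : Fin n → M,
      ψ.Realize (Sum.elim (Sum.elim Subtype.val b) c') ↔ φ.Realize (Sum.elim c' b) := by
    intro c'
    have hval : Sum.elim (Sum.elim Subtype.val b) c' ∘
        Sum.elim (Sum.inl ∘ Sum.inl) (Sum.elim Sum.inr (Sum.inl ∘ Sum.inr)) =
        Sum.elim (fun a : (N : Set M) => (L.con a : M)) (Sum.elim c' b) := by
      funext x; rcases x with a | i | j; exacts [(coe_con L _).symm, rfl, rfl]
    rw [Formula.realize_relabel, hval]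
    exact BoundedFormula.realize_constantsVarsEquiv
  obtain ⟨c', hc'N, hc'⟩ := N.exists_realize_sum_elim ψ
    (by rintro _ ⟨a | i, rfl⟩; exacts [a.2, hb (mem_range_self i)]) ((realize_ψ c).mpr hφ)
  exact ⟨c', hc'N, (realize_ψ c').mp hc'⟩

section DualFiniteCharacter

variable {Forks Divides : ∀ {n : ℕ}, (Fin n → M) → Set M → Set M → Prop}

theorem hasDFC_of_symm_of_witness
    (hsym : ∀ (A : Set M) {n m : ℕ} (c : Fin n → M) (b : Fin m → M),
      Forks c (A ∪ range b) A ↔ Forks b (A ∪ range c) A)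
    (hwitness : ∀ (A : Set M) {m n : ℕ} (b : Fin m → M) (c : Fin n → M),
      Forks b (A ∪ range c) A →
      ∃ ψ : (L[[A]]).Formula (Fin m ⊕ Fin n),
        ψ.Realize (Sum.elim b c) ∧
        ∀ b' : Fin m → M, ψ.Realize (Sum.elim b' c) → Forks b' (A ∪ range c) A) :
    HasDFC (L := L) Forks := by
  intro A n m c b hforks
  obtain ⟨ψ, hψ, hψ_forks⟩ := hwitness A b c ((hsym A c b).mp hforks)
  refine ⟨ψ.relabel Sum.swap, (ψ.realize_relabel_swap_s7 b c).mpr hψ, fun b' hb' => ?_⟩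
  exact (hsym A c b').mpr (hψ_forks b' ((ψ.realize_relabel_swap_s7 b' c).mp hb'))

theorem HasDFC.hasWeakDFC (hdfc : HasDFC (L := L) Forks)
    (hdiv_fork : ∀ {n : ℕ} (c : Fin n → M) (B A : Set M), Divides c B A → Forks c B A)
    (hfinsat_nofork : ∀ (N : L.ElementarySubstructure M) {n m : ℕ}
      (c : Fin n → M) (b : Fin m → M),
      FinSatIn (L := L) (N : Set M) c b → ¬ Forks c ((N : Set M) ∪ range b) (N : Set M)) :
    HasWeakDFC (L := L) Divides := by
  intro N n m c b hdiv
  obtain ⟨φ, hφ, hφ_forks⟩ := hdfc (N : Set M) c b (hdiv_fork c _ _ hdiv)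
  exact ⟨φ, hφ, fun b' hb' hfs => hfinsat_nofork N c b' hfs (hφ_forks b' hb')⟩

theorem not_hasWeakDFC_of_finSatIn_of_divides (N : L.ElementarySubstructure M) {n m : ℕ}
    {b : Fin n → M} {c : Fin m → M} (hfs : FinSatIn (L := L) (N : Set M) b c)
    (hdiv : Divides c ((N : Set M) ∪ range b) (N : Set M)) :
    ¬ HasWeakDFC (L := L) Divides := by
  intro hwdfc
  obtain ⟨φ, hφ, hφ_not_finSat⟩ := hwdfc N c b hdiv
  obtain ⟨b', hb'N, hb'⟩ := hfs (φ.relabel Sum.swap) ((φ.realize_relabel_swap_s7 c b).mpr hφ)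
  exact hφ_not_finSat b' ((φ.realize_relabel_swap_s7 c b').mp hb')
    (finSatIn_of_range_subset N c hb'N)

end DualFiniteCharacter

/-- for a complete first-order theory the following are equivalent:
(1) `T` is simple, (2) forking has DFC, (3) forking has weak DFC.  Simplicity is taken
(per Kim's theorem) to be equivalent to symmetry of forking (`hsimple_iff_sym`); the other
standard facts used are: forking is witnessed by formulas, dividing implies forking,
finite satisfiability in a model implies nonforking over it, and Chernikov's failure of
symmetry for non-simple theories (`hfact`). -/
theorem simple_iff_dfc_iff_weak_dfc
    (Forks Divides : ∀ {n : ℕ}, (Fin n → M) → Set M → Set M → Prop)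
    (TSimple : Prop)
    (hsimple_iff_sym : TSimple ↔
      ∀ (A : Set M) {n m : ℕ} (c : Fin n → M) (b : Fin m → M),
        Forks c (A ∪ range b) A ↔ Forks b (A ∪ range c) A)
    (hwitness : ∀ (A : Set M) {m n : ℕ} (b : Fin m → M) (c : Fin n → M),
      Forks b (A ∪ range c) A →
      ∃ ψ : (L[[A]]).Formula (Fin m ⊕ Fin n),
        ψ.Realize (Sum.elim b c) ∧
        ∀ b' : Fin m → M, ψ.Realize (Sum.elim b' c) → Forks b' (A ∪ range c) A)
    (hdiv_fork : ∀ {n : ℕ} (c : Fin n → M) (B A : Set M), Divides c B A → Forks c B A)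
    (hfinsat_nofork : ∀ (N : L.ElementarySubstructure M) {n m : ℕ}
      (c : Fin n → M) (b : Fin m → M),
      FinSatIn (L := L) (N : Set M) c b →
      ¬ Forks c ((N : Set M) ∪ range b) (N : Set M))
    (hfact : ¬ TSimple → ∃ (N : L.ElementarySubstructure M) (n m : ℕ)
      (b : Fin n → M) (c : Fin m → M),
      FinSatIn (L := L) (N : Set M) b c ∧
      Divides c ((N : Set M) ∪ range b) (N : Set M)) :
    (TSimple ↔ HasDFC (L := L) (M := M) Forks) ∧
    (TSimple ↔ HasWeakDFC (L := L) (M := M) Divides) := by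
  have simple_dfc : TSimple → HasDFC (L := L) Forks := fun hS =>
    hasDFC_of_symm_of_witness (hsimple_iff_sym.mp hS) hwitness
  have dfc_weakDFC : HasDFC (L := L) Forks → HasWeakDFC (L := L) Divides := fun hdfc =>
    hdfc.hasWeakDFC hdiv_fork hfinsat_nofork
  have weakDFC_simple : HasWeakDFC (L := L) Divides → TSimple := by
    intro hwdfc
    by_contra hns
    obtain ⟨N, n, m, b, c, hfs, hdiv⟩ := hfact hns
    exact not_hasWeakDFC_of_finSatIn_of_divides N hfs hdiv hwdfc
  exact ⟨⟨simple_dfc, weakDFC_simple ∘ dfc_weakDFC⟩, ⟨dfc_weakDFC ∘ simple_dfc, weakDFC_simple⟩⟩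
end
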